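/- arXiv:2106.15455 — 2 statements merged into one kernel-verified Lean document; each statement's English description precedes it below -/
import Mathlib

section
/- For all natural numbers m, n, N with 1 ≤ m < n ≤ N − 1, one has (−1)^m · ((m+1)(n−m)_m (N−n)_m)/(m! (N)_{m+1}) · ∑_{k=0}^m [(−m)_k (n+1)_k (1−N+n)_k]/[(n−m)_k (1−N−m+n)_k k!] = ((m+1)²/N) · ∑_{k=0}^m [(−m)_k (n+1)_k (m+2)_k]/[(2)_k (N+1)_k k!] (as an identity of rational numbers). -/
/-!
Both series are terminating `₃F₂(-m, a, b; c, d; 1)` and Sheppard's transformation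
`₃F₂(-m, a, b; c, d; 1) = (d - b)_m / (d)_m · ₃F₂(-m, c - a, b; c, 1 + b - d - m; 1)`
sends each of them to a multiple of the same series
`₃F₂(-m, N - m - 1, n + 1; n - m, N + 1; 1)`.
Sheppard's transformation itself follows by expanding `(a)_k / (c)_k` as a terminating
Chu–Vandermonde sum, exchanging the two summations and summing the inner series by
Chu–Vandermonde again. The two constants then agree by the reflection formula
`(x)_p = (-1)^p (1 - x - p)_p`.
-/

/-- The Pochhammer symbol `(a)_k = a (a+1) ⋯ (a+k-1)` over ℚ. -/
noncomputable def poch (a : ℚ) (k : ℕ) : ℚ := (ascPochhammer ℚ k).eval a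

open Finset Nat

@[simp] lemma poch_one (a : ℚ) : poch a 1 = a := by simp [poch]

lemma poch_add (a : ℚ) (j i : ℕ) : poch a (j + i) = poch a j * poch (a + j) i := by
  simp [poch, ← ascPochhammer_mul, Polynomial.eval_comp]

lemma poch_eq_mul_of_le (a : ℚ) {j m : ℕ} (h : j ≤ m) :
    poch a m = poch a j * poch (a + j) (m - j) := by
  rw [← poch_add, Nat.add_sub_cancel' h]

lemma poch_reflect (x y : ℚ) {p : ℕ} (h : x + y + p = 1) : poch x p = (-1) ^ p * poch y p := by
  obtain rfl : y = 1 - x - p := by linear_combination h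
  rw [poch, ← neg_neg x, ascPochhammer_eval_neg_eq_descPochhammer,
    descPochhammer_eval_eq_ascPochhammer, poch]
  ring_nf

lemma poch_ne_zero_of_pos {x : ℚ} (hx : 0 < x) (m : ℕ) : poch x m ≠ 0 :=
  (ascPochhammer_pos m x hx).ne'

lemma poch_ne_zero_of_add_lt_one {x : ℚ} {m : ℕ} (hx : x + m < 1) : poch x m ≠ 0 := by
  rw [poch_reflect x (1 - x - m) (by ring)]
  exact mul_ne_zero (pow_ne_zero _ (by norm_num)) (poch_ne_zero_of_pos (by linarith) m)

lemma poch_two (m : ℕ) : poch 2 m = (m + 1)! := by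
  calc poch 2 m = poch 1 (1 + m) := by rw [poch_add]; norm_num
    _ = (m + 1)! := by rw [poch, ascPochhammer_eval_one, add_comm]

lemma poch_neg_natCast (n j : ℕ) : poch (-(n : ℚ)) j = (-1) ^ j * n.descFactorial j := by
  rw [poch, ascPochhammer_eval_neg_eq_descPochhammer, descPochhammer_eval_eq_descFactorial]

lemma descPochhammer_smeval_eq_poch (x : ℚ) (n : ℕ) :
    (descPochhammer ℤ n).smeval x = poch (x - n + 1) n := by
  rw [Polynomial.descPochhammer_smeval_eq_ascPochhammer, Polynomial.ascPochhammer_smeval_eq_eval,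
    poch]

lemma poch_sub_eq_sum (b c : ℚ) (k : ℕ) :
    poch (c - b) k =
      ∑ j ∈ range (k + 1), (-1) ^ j * k.choose j * poch b j * poch (c + j) (k - j) := by
  have h := Ring.descPochhammer_smeval_add (r := -b) (s := c + k - 1) k (Commute.all _ _)
  rw [Nat.sum_antidiagonal_eq_sum_range_succ_mk, descPochhammer_smeval_eq_poch,
    show -b + (c + k - 1) - k + 1 = c - b by ring] at h
  rw [h]
  refine sum_congr rfl fun j hj => ?_
  have hjk : j ≤ k := Nat.lt_succ_iff.mp (mem_range.mp hj)
  rw [descPochhammer_smeval_eq_poch, descPochhammer_smeval_eq_poch, Nat.cast_sub hjk,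
    poch_reflect (-b - j + 1) b (by ring), show c + k - 1 - (k - j) + 1 = c + j by ring]
  ring

lemma poch_neg_natCast_div_factorial (n j : ℕ) :
    poch (-(n : ℚ)) j / j ! = (-1) ^ j * n.choose j := by
  rw [poch_neg_natCast, Nat.descFactorial_eq_factorial_mul_choose]
  push_cast
  field_simp

lemma poch_neg_natCast_add_mul_div_factorial (m j i : ℕ) (h : j ≤ m) :
    poch (-(m : ℚ)) (j + i) * poch (-((j + i : ℕ) : ℚ)) j / (j + i)! =
      (-1) ^ j * poch (-(m : ℚ)) j * poch (-((m - j : ℕ) : ℚ)) i / i ! := by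
  have hfac : ((j + i).descFactorial j : ℚ) * i ! = (j + i)! := by
    have := Nat.factorial_mul_descFactorial (Nat.le_add_right j i)
    rw [Nat.add_sub_cancel_left] at this
    rw [mul_comm]
    exact_mod_cast this
  rw [poch_add, Nat.cast_sub h, neg_add_eq_sub, ← neg_sub, poch_neg_natCast (j + i), ← hfac]
  field_simp

lemma neg_one_pow_mul_poch_tsub_mul_poch (x : ℚ) {j m : ℕ} (h : j ≤ m) :
    (-1) ^ j * poch x (m - j) * poch (1 - x - m) j = poch x m := by
  rw [poch_eq_mul_of_le x (Nat.sub_le m j), Nat.sub_sub_self h, Nat.cast_sub h,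
    poch_reflect (1 - x - m) (x + (m - j)) (by ring)]
  have hsign : ((-1 : ℚ) ^ j) * (-1) ^ j = 1 := by rw [← mul_pow]; norm_num
  linear_combination poch x (m - j) * poch (x + (m - j)) j * hsign

/-- `terminatingF21 p b c = ₂F₁(-p, b; c; 1)`; likewise
`terminatingF32 m a b c d = ₃F₂(-m, a, b; c, d; 1)`. -/
noncomputable def terminatingF21 (p : ℕ) (b c : ℚ) : ℚ :=
  ∑ i ∈ range (p + 1), poch (-(p : ℚ)) i * poch b i / (poch c i * i !)

noncomputable def terminatingF32 (m : ℕ) (a b c d : ℚ) : ℚ :=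
  ∑ k ∈ range (m + 1),
    poch (-(m : ℚ)) k * poch a k * poch b k / (poch c k * poch d k * k !)

theorem terminatingF21_eq {p : ℕ} {b c : ℚ} (hc : poch c p ≠ 0) :
    terminatingF21 p b c = poch (c - b) p / poch c p := by
  rw [terminatingF21, poch_sub_eq_sum, sum_div]
  refine sum_congr rfl fun i hi => ?_
  have hip : i ≤ p := Nat.lt_succ_iff.mp (mem_range.mp hi)
  rw [poch_eq_mul_of_le c hip] at hc ⊢
  obtain ⟨hci, hcp⟩ := mul_ne_zero_iff.mp hc
  rw [← poch_neg_natCast_div_factorial]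
  field_simp

lemma terminatingF32_comm_upper (m : ℕ) (a b c d : ℚ) :
    terminatingF32 m a b c d = terminatingF32 m b a c d := by
  simp only [terminatingF32, mul_right_comm _ (poch a _)]

lemma terminatingF32_comm_lower (m : ℕ) (a b c d : ℚ) :
    terminatingF32 m a b c d = terminatingF32 m a b d c := by
  simp only [terminatingF32, mul_comm (poch c _)]

theorem terminatingF32_eq_sum_terminatingF21 {m : ℕ} {a b c d : ℚ} (hc : poch c m ≠ 0) :
    terminatingF32 m a b c d =
      ∑ j ∈ range (m + 1), (-1) ^ j * poch (-(m : ℚ)) j * poch (c - a) j * poch b j /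
        (poch c j * poch d j * j !) * terminatingF21 (m - j) (b + j) (d + j) := by
  let g : ℕ → ℕ → ℚ := fun j i =>
    poch (-(m : ℚ)) (j + i) * poch b (j + i) / (poch d (j + i) * (j + i)!) *
      (poch (-((j + i : ℕ) : ℚ)) j * poch (c - a) j / (poch c j * j !))
  have expand : ∀ k ∈ range (m + 1),
      poch (-(m : ℚ)) k * poch a k * poch b k / (poch c k * poch d k * k !) =
        ∑ j ∈ range (k + 1), g j (k - j) := by
    intro k hk
    have hck : poch c k ≠ 0 :=
      left_ne_zero_of_mul (poch_eq_mul_of_le c (Nat.lt_succ_iff.mp (mem_range.mp hk)) ▸ hc)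
    have hF := terminatingF21_eq (b := c - a) hck
    rw [sub_sub_cancel] at hF
    calc poch (-(m : ℚ)) k * poch a k * poch b k / (poch c k * poch d k * k !)
        = poch (-(m : ℚ)) k * poch b k / (poch d k * k !) * (poch a k / poch c k) := by ring
      _ = ∑ j ∈ range (k + 1), g j (k - j) := by
        rw [← hF, terminatingF21, mul_sum]
        refine sum_congr rfl fun j hj => ?_
        simp only [g, Nat.add_sub_cancel' (Nat.lt_succ_iff.mp (mem_range.mp hj))]
  rw [terminatingF32, sum_congr rfl expand, sum_range_diag_flip]
  refine sum_congr rfl fun j hj => ?_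
  have hjm : j ≤ m := Nat.lt_succ_iff.mp (mem_range.mp hj)
  rw [terminatingF21, mul_sum, show m + 1 - j = m - j + 1 by omega]
  refine sum_congr rfl fun i _ => ?_
  calc g j i
      = poch (-(m : ℚ)) (j + i) * poch (-((j + i : ℕ) : ℚ)) j / (j + i)! *
          (poch b j * poch (b + j) i * poch (c - a) j /
            (poch d j * poch (d + j) i * poch c j * j !)) := by
        simp only [g, poch_add b, poch_add d]
        ring
    _ = _ := by
        rw [poch_neg_natCast_add_mul_div_factorial m j i hjm]
        ring

theorem terminatingF32_sheppard {m : ℕ} {a b c d : ℚ} (hc : poch c m ≠ 0)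
    (hd : poch d m ≠ 0) (he : poch (1 + b - d - m) m ≠ 0) :
    terminatingF32 m a b c d =
      poch (d - b) m / poch d m * terminatingF32 m (c - a) b c (1 + b - d - m) := by
  rw [terminatingF32_eq_sum_terminatingF21 hc, terminatingF32, mul_sum]
  refine sum_congr rfl fun j hj => ?_
  have hjm : j ≤ m := Nat.lt_succ_iff.mp (mem_range.mp hj)
  have hej : poch (1 + b - d - m) j ≠ 0 :=
    left_ne_zero_of_mul (poch_eq_mul_of_le _ hjm ▸ he)
  have hcj : poch c j ≠ 0 := left_ne_zero_of_mul (poch_eq_mul_of_le _ hjm ▸ hc)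
  rw [poch_eq_mul_of_le d hjm] at hd ⊢
  obtain ⟨hdj, hdm⟩ := mul_ne_zero_iff.mp hd
  have hrefl := neg_one_pow_mul_poch_tsub_mul_poch (d - b) hjm
  rw [show 1 - (d - b) - m = 1 + b - d - m by ring] at hrefl
  rw [terminatingF21_eq hdm, add_sub_add_right_eq_sub]
  field_simp
  linear_combination poch (-(m : ℚ)) j * poch (c - a) j * poch b j * hrefl

lemma terminatingF32_shmaliy_lhs {m : ℕ} {x y : ℚ} (hxm : m < x) (hxy : x < y) :
    terminatingF32 m (x + 1) (1 - y + x) (x - m) (1 - y - m + x) =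
      poch (y + 1) m / poch (y - x) m *
        terminatingF32 m (y - m - 1) (x + 1) (x - m) (y + 1) := by
  have hm : (0 : ℚ) ≤ m := m.cast_nonneg
  rw [terminatingF32_comm_upper, terminatingF32_sheppard (poch_ne_zero_of_pos (by linarith) m)
        (poch_ne_zero_of_add_lt_one (by linarith)) (poch_ne_zero_of_pos (by linarith) m)]
  rw [show 1 - y - m + x - (x + 1) = -y - m by ring, show x - m - (1 - y + x) = y - m - 1 by ring,
    show 1 + (x + 1) - (1 - y - m + x) - m = y + 1 by ring,
    poch_reflect (-y - m) (y + 1) (by ring), poch_reflect (1 - y - m + x) (y - x) (by ring),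
    mul_div_mul_left _ _ (pow_ne_zero _ (by norm_num))]

lemma terminatingF32_shmaliy_rhs {m : ℕ} {x y : ℚ} (hxm : m < x) (hy : 0 < y + 1) :
    terminatingF32 m (x + 1) (m + 2) 2 (y + 1) =
      (-1) ^ m * poch (x - m) m / (m + 1)! *
        terminatingF32 m (y - m - 1) (x + 1) (x - m) (y + 1) := by
  rw [terminatingF32_comm_upper, terminatingF32_comm_lower, terminatingF32_sheppard
    (poch_ne_zero_of_pos hy m) (poch_ne_zero_of_pos two_pos m)
    (poch_ne_zero_of_pos (by linarith) m),
    terminatingF32_comm_lower _ _ _ (y + 1)]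
  rw [show (2 : ℚ) - (x + 1) = 1 - x by ring, show y + 1 - (m + 2) = y - m - 1 by ring,
    show 1 + (x + 1) - 2 - m = x - m by ring, poch_reflect (1 - x) (x - m) (by ring), poch_two]

theorem shmaliy_hypergeometric_representations_general (m n N : ℕ)
    (hmn : m < n) (hnN : n ≤ N - 1) :
    (-1 : ℚ) ^ m *
        (((m : ℚ) + 1) * poch ((n : ℚ) - m) m * poch ((N : ℚ) - n) m) /
        ((m.factorial : ℚ) * poch (N : ℚ) (m + 1)) *
      ∑ k ∈ Finset.range (m + 1),
        (poch (-(m : ℚ)) k * poch ((n : ℚ) + 1) k * poch (1 - (N : ℚ) + n) k) /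
          (poch ((n : ℚ) - m) k * poch (1 - (N : ℚ) - m + n) k * (k.factorial : ℚ)) =
    (((m : ℚ) + 1) ^ 2 / N) *
      ∑ k ∈ Finset.range (m + 1),
        (poch (-(m : ℚ)) k * poch ((n : ℚ) + 1) k * poch ((m : ℚ) + 2) k) /
          (poch 2 k * poch ((N : ℚ) + 1) k * (k.factorial : ℚ)) := by
  have hmn' : (m : ℚ) < n := by exact_mod_cast hmn
  have hnN' : (n : ℚ) < N := by exact_mod_cast (by omega : n < N)
  have hN : (0 : ℚ) < N := by linarith [n.cast_nonneg (α := ℚ)]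
  change _ * terminatingF32 m _ _ _ _ = _ * terminatingF32 m _ _ _ _
  rw [terminatingF32_shmaliy_lhs hmn' hnN', terminatingF32_shmaliy_rhs hmn' (by linarith)]
  simp only [← mul_assoc]
  congr 1
  have hN1 := poch_ne_zero_of_pos (x := N + 1) (by linarith) m
  have hNn := poch_ne_zero_of_pos (x := N - n) (by linarith) m
  rw [Nat.factorial_succ, add_comm m 1, poch_add, poch_one, Nat.cast_one]
  push_cast
  field_simp
  ring

theorem shmaliy_hypergeometric_representations (m n N : ℕ)
    (hm : 1 ≤ m) (hmn : m < n) (hnN : n ≤ N - 1) :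
    (-1 : ℚ) ^ m *
        (((m : ℚ) + 1) * poch ((n : ℚ) - m) m * poch ((N : ℚ) - n) m) /
        ((m.factorial : ℚ) * poch (N : ℚ) (m + 1)) *
      ∑ k ∈ Finset.range (m + 1),
        (poch (-(m : ℚ)) k * poch ((n : ℚ) + 1) k * poch (1 - (N : ℚ) + n) k) /
          (poch ((n : ℚ) - m) k * poch (1 - (N : ℚ) - m + n) k * (k.factorial : ℚ)) =
    (((m : ℚ) + 1) ^ 2 / N) *
      ∑ k ∈ Finset.range (m + 1),
        (poch (-(m : ℚ)) k * poch ((n : ℚ) + 1) k * poch ((m : ℚ) + 2) k) /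
          (poch 2 k * poch ((N : ℚ) + 1) k * (k.factorial : ℚ)) :=
  shmaliy_hypergeometric_representations_general m n N hmn hnN
end

section
/- For all natural numbers N ≥ 1 and all natural numbers m with 0 ≤ m ≤ N − 1, one has ∑_{n=0}^{N−1} h_m(n,N) = 1, where h_m(n,N) = ((m+1)²/N) ∑_{k=0}^m [(−m)_k (n+1)_k (m+2)_k]/[(2)_k (N+1)_k k!]. -/
/-- The Shmaliy polynomial `h_m(n,N)`. -/
noncomputable def shmaliy (m n N : ℕ) : ℚ :=
  (((m : ℚ) + 1) ^ 2 / N) *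
    ∑ k ∈ Finset.range (m + 1),
      (poch (-(m : ℚ)) k * poch ((n : ℚ) + 1) k * poch ((m : ℚ) + 2) k) /
        (poch 2 k * poch ((N : ℚ) + 1) k * (k.factorial : ℚ))


/-!
Summing over `n` first, the hockey-stick identity `(k + 1) ∑_{n<N} (n+1)_k = N (N+1)_k` removes
all dependence on `N`, and with `x = m + 1` the sum becomes `x² ∑_{k ≤ m} t_k`, where
`t_k = (1-x)_k (1+x)_k / ((k+1)!)²`. Since `(k+2)² t_{k+1} = ((k+1)² - x²) t_k`, the partial sums
telescope: `x² ∑_{k ≤ i} t_k = 1 + (x² - (i+1)²) t_i`, and the last term vanishes at `i = m`.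
-/

open Finset

lemma poch_succ (a : ℚ) (k : ℕ) : poch a (k + 1) = poch a k * (a + k) :=
  ascPochhammer_succ_eval k a

lemma poch_succ_left (a : ℚ) (k : ℕ) : poch a (k + 1) = a * poch (a + 1) k := by
  simp [poch, ascPochhammer_succ_left, Polynomial.eval_comp]

lemma poch_two_s3 (k : ℕ) : poch 2 k = (k + 1).factorial := by
  have h := factorial_mul_ascPochhammer ℚ 1 k
  norm_num at h
  rw [poch, h, add_comm]

lemma poch_pos {a : ℚ} (h : 0 < a) (k : ℕ) : 0 < poch a k :=
  ascPochhammer_pos k a h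

lemma succ_mul_sum_poch_natCast_add_one (k N : ℕ) :
    ((k : ℚ) + 1) * ∑ n ∈ range N, poch ((n : ℚ) + 1) k = N * poch ((N : ℚ) + 1) k := by
  induction N with
  | zero => simp
  | succ N ih =>
    rw [sum_range_succ, mul_add, ih]
    have h := (poch_succ ((N : ℚ) + 1) k).symm.trans (poch_succ_left ((N : ℚ) + 1) k)
    push_cast
    linear_combination h

/-- With `x = m + 1` this is the `k`-th term of `h_m(n, N) / (m + 1)²` after summing over `n`. -/
noncomputable def shmaliyCoeff (x : ℚ) (k : ℕ) : ℚ :=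
  poch (1 - x) k * poch (1 + x) k / ((k + 1).factorial : ℚ) ^ 2

lemma shmaliyCoeff_succ (x : ℚ) (k : ℕ) :
    ((k : ℚ) + 2) ^ 2 * shmaliyCoeff x (k + 1) = ((k + 1) ^ 2 - x ^ 2) * shmaliyCoeff x k := by
  have hk : ((k + 1).factorial : ℚ) ≠ 0 := by positivity
  simp only [shmaliyCoeff, poch_succ, Nat.factorial_succ (k + 1)]
  push_cast
  field_simp
  ring

lemma sq_mul_sum_shmaliyCoeff (x : ℚ) (i : ℕ) :
    x ^ 2 * ∑ k ∈ range (i + 1), shmaliyCoeff x k =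
      1 + (x ^ 2 - (i + 1) ^ 2) * shmaliyCoeff x i := by
  induction i with
  | zero => simp [shmaliyCoeff, poch]
  | succ i ih =>
    rw [sum_range_succ, mul_add, ih]
    push_cast
    linear_combination shmaliyCoeff_succ x i

lemma sum_shmaliyCoeff (m : ℕ) :
    ((m : ℚ) + 1) ^ 2 * ∑ k ∈ range (m + 1), shmaliyCoeff ((m : ℚ) + 1) k = 1 := by
  simp [sq_mul_sum_shmaliyCoeff]

theorem shmaliy_sum_eq_one_general (N m : ℕ) (hN : 1 ≤ N) :
    ∑ n ∈ Finset.range N, shmaliy m n N = 1 := by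
  have hcoeff (k : ℕ) : ∑ n ∈ range N,
      poch (-(m : ℚ)) k * poch ((n : ℚ) + 1) k * poch ((m : ℚ) + 2) k /
        (poch 2 k * poch ((N : ℚ) + 1) k * (k.factorial : ℚ)) =
      N * shmaliyCoeff ((m : ℚ) + 1) k := by
    have hP : poch ((N : ℚ) + 1) k ≠ 0 := (poch_pos (by positivity) k).ne'
    have hsum : ∑ n ∈ range N, poch ((n : ℚ) + 1) k = N * poch ((N : ℚ) + 1) k / (k + 1) := by
      rw [eq_div_iff (by positivity), mul_comm]
      exact succ_mul_sum_poch_natCast_add_one k N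
    rw [← sum_div, ← sum_mul, ← mul_sum, hsum, poch_two_s3, shmaliyCoeff, Nat.factorial_succ,
      show (1 : ℚ) - (m + 1) = -m by ring, show (1 : ℚ) + (m + 1) = m + 2 by ring]
    push_cast
    field_simp
  simp only [shmaliy, ← mul_sum]
  rw [sum_comm]
  simp only [hcoeff, ← mul_sum]
  rw [← mul_assoc, div_mul_cancel₀ _ (Nat.cast_ne_zero.mpr (by omega)), sum_shmaliyCoeff]

theorem shmaliy_sum_eq_one (N m : ℕ) (hN : 1 ≤ N) (hm : m ≤ N - 1) :
    ∑ n ∈ Finset.range N, shmaliy m n N = 1 :=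
  shmaliy_sum_eq_one_general N m hN
end
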